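/- Let K ⊆ ℝ^n be a nonempty closed convex set and f a polynomial of degree d ≥ 1 such that OP(K,f) is regular (Sol(K∞, f_d) is bounded). Then the solution map is locally bounded at f: there exists ε > 0 such that the union O_ε = ⋃_{g ∈ B(ε)} Sol(K, f+g) is bounded, where B(ε) is the open ball of radius ε centered at 0 in the space P_d of polynomials of degree at most d. -/

import Mathlib

open Filter Topology MvPolynomial Bornology
open scoped RealInnerProductSpace Pointwise

noncomputable section

/-- `ℝ^n` as Euclidean space. -/
abbrev En (n : ℕ) := EuclideanSpace ℝ (Fin n)

/-- Evaluation of a multivariate polynomial at a point of `ℝ^n`. -/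
def evalP {n : ℕ} (f : MvPolynomial (Fin n) ℝ) (x : En n) : ℝ :=
  MvPolynomial.eval (fun i => x i) f

/-- `Sol(C,g)`: the set of global minimizers of `g` on `C`. -/
def solSet {n : ℕ} (C : Set (En n)) (g : En n → ℝ) : Set (En n) :=
  {x ∈ C | ∀ y ∈ C, g x ≤ g y}

/-- `K∞`: the asymptotic cone of `K`. -/
def asympCone {n : ℕ} (K : Set (En n)) : Set (En n) :=
  {v | ∃ (t : ℕ → ℝ) (x : ℕ → En n), (∀ k, x k ∈ K) ∧
    Tendsto t atTop atTop ∧ Tendsto (fun k => (t k)⁻¹ • x k) atTop (𝓝 v)}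

/-- The gradient `∇f` of a polynomial, via its partial derivatives. -/
def polyGrad {n : ℕ} (f : MvPolynomial (Fin n) ℝ) (x : En n) : En n :=
  WithLp.toLp 2 (fun i => MvPolynomial.eval (fun j => x j) (MvPolynomial.pderiv i f))

/-- The `ℓ2`-norm of the coefficient vector of a polynomial. -/
def l2Norm {n : ℕ} (p : MvPolynomial (Fin n) ℝ) : ℝ :=
  Real.sqrt (∑ m ∈ p.support, (MvPolynomial.coeff m p) ^ 2)

/-- `S` is generic (residual) in `X`: it contains a countable intersection of sets, each of
which is open and dense in `X` (with respect to the `ℓ2` coefficient metric). -/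
def IsGenericIn {n : ℕ} (X S : Set (MvPolynomial (Fin n) ℝ)) : Prop :=
  ∃ D : ℕ → Set (MvPolynomial (Fin n) ℝ),
    (∀ k, D k ⊆ X ∧
      (∀ g ∈ D k, ∃ ε > 0, ∀ g' ∈ X, l2Norm (g' - g) < ε → g' ∈ D k) ∧
      (∀ g ∈ X, ∀ ε > 0, ∃ g' ∈ D k, l2Norm (g' - g) < ε)) ∧
    X ∩ (⋂ k, D k) ⊆ S

/-! If the claim failed, there would be perturbations `g k → 0` of degree `≤ d` and minimizers
`x k` of `f + g k` on `K` with `‖x k‖ → ∞`; along a subsequence `x k / ‖x k‖ → v ∈ K∞`, `‖v‖ = 1`.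
For `K` closed and convex, `y + s • w ∈ K` whenever `y ∈ K`, `w ∈ K∞`, `s ≥ 0`, so comparing
`x k` with `y + ‖x k‖ • w` and dividing by `‖x k‖ ^ d` gives `f_d v ≤ f_d w` in the limit: `v`
minimizes `f_d` on the cone `K∞`. Homogeneity then forces the minimum value to be `0`, so the whole
ray through `v` consists of minimizers, contradicting regularity. -/

lemma continuous_evalP {n : ℕ} (f : MvPolynomial (Fin n) ℝ) : Continuous (evalP f) :=
  (MvPolynomial.continuous_eval f).comp (continuous_pi fun i => by fun_prop)

lemma evalP_add {n : ℕ} (f g : MvPolynomial (Fin n) ℝ) (x : En n) :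
    evalP (f + g) x = evalP f x + evalP g x :=
  map_add _ f g

lemma evalP_eq_sum_homogeneousComponent {n d : ℕ} {f : MvPolynomial (Fin n) ℝ}
    (hf : f.totalDegree ≤ d) (x : En n) :
    evalP f x = ∑ j ∈ Finset.range (d + 1), evalP (homogeneousComponent j f) x := by
  have hsum : ∑ j ∈ Finset.range (d + 1), homogeneousComponent j f = f := by
    rw [← Finset.sum_subset (Finset.range_subset_range.2 (Nat.succ_le_succ hf))
      fun j _ hj => homogeneousComponent_eq_zero j f (by simpa using hj)]
    exact sum_homogeneousComponent f
  conv_lhs => rw [← hsum]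
  exact map_sum _ _ _

lemma MvPolynomial.IsHomogeneous.evalP_smul {n j : ℕ} {p : MvPolynomial (Fin n) ℝ}
    (hp : p.IsHomogeneous j) (c : ℝ) (x : En n) : evalP p (c • x) = c ^ j * evalP p x := by
  simp only [evalP, eval_eq', Finset.mul_sum, PiLp.smul_apply, smul_eq_mul, mul_pow,
    Finset.prod_mul_distrib, Finset.prod_pow_eq_pow_sum]
  refine Finset.sum_congr rfl fun m hm => ?_
  rw [← Finsupp.degree_eq_sum, Finsupp.degree_apply, ← hp.degree_eq_sum_deg_support hm]
  ring

lemma l2Norm_nonneg {n : ℕ} (p : MvPolynomial (Fin n) ℝ) : 0 ≤ l2Norm p := Real.sqrt_nonneg _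

lemma abs_coeff_le_l2Norm {n : ℕ} (p : MvPolynomial (Fin n) ℝ) (m : Fin n →₀ ℕ) :
    |coeff m p| ≤ l2Norm p := by
  by_cases hm : m ∈ p.support
  · rw [← Real.sqrt_sq_eq_abs]
    exact Real.sqrt_le_sqrt (Finset.single_le_sum (f := fun m' => coeff m' p ^ 2)
      (fun _ _ => sq_nonneg _) hm)
  · simp [notMem_support_iff.mp hm, l2Norm_nonneg p]

lemma card_support_le_of_totalDegree_le {σ R : Type*} [Fintype σ] [DecidableEq σ] [CommSemiring R]
    {p : MvPolynomial σ R} {d : ℕ} (hp : p.totalDegree ≤ d) :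
    p.support.card ≤ (d + 1) ^ Fintype.card σ := by
  have hmaps : ∀ m ∈ p.support, ⇑m ∈ Fintype.piFinset fun _ : σ => Finset.range (d + 1) :=
    fun m hm => Fintype.mem_piFinset.2 fun i => Finset.mem_range.2 <| Nat.lt_succ_of_le <|
      (m.le_degree i).trans ((le_totalDegree hm).trans hp)
  simpa using Finset.card_le_card_of_injOn _ hmaps DFunLike.coe_injective.injOn

lemma abs_prod_pow_le {n : ℕ} (x : En n) (m : Fin n →₀ ℕ) :
    |∏ i, x i ^ m i| ≤ max 1 ‖x‖ ^ m.degree := by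
  rw [Finset.abs_prod, Finsupp.degree_eq_sum, ← Finset.prod_pow_eq_pow_sum]
  gcongr with i
  rw [abs_pow, ← Real.norm_eq_abs]
  exact pow_le_pow_left₀ (norm_nonneg _) ((PiLp.norm_apply_le x i).trans (le_max_right _ _)) _

lemma abs_evalP_le {n d : ℕ} {p : MvPolynomial (Fin n) ℝ} (hp : p.totalDegree ≤ d) (x : En n) :
    |evalP p x| ≤ (d + 1) ^ n * l2Norm p * max 1 ‖x‖ ^ d := by
  have hterm : ∀ m ∈ p.support, |coeff m p * ∏ i, x i ^ m i| ≤ l2Norm p * max 1 ‖x‖ ^ d :=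
    fun m hm => by
      rw [abs_mul]
      exact mul_le_mul (abs_coeff_le_l2Norm p m) ((abs_prod_pow_le x m).trans
        (pow_le_pow_right₀ (le_max_left _ _) ((le_totalDegree hm).trans hp)))
        (abs_nonneg _) (l2Norm_nonneg p)
  have hcard : (p.support.card : ℝ) ≤ (d + 1) ^ n := by
    exact_mod_cast (card_support_le_of_totalDegree_le hp).trans_eq (by simp)
  have := l2Norm_nonneg p
  calc |evalP p x| ≤ ∑ m ∈ p.support, |coeff m p * ∏ i, x i ^ m i| := by
        rw [evalP, eval_eq']; exact Finset.abs_sum_le_sum_abs _ _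
    _ ≤ p.support.card * (l2Norm p * max 1 ‖x‖ ^ d) := by
        simpa using Finset.sum_le_sum hterm
    _ ≤ (d + 1) ^ n * l2Norm p * max 1 ‖x‖ ^ d := by
        rw [← mul_assoc]; gcongr

lemma MvPolynomial.IsHomogeneous.tendsto_evalP_div_pow {n j : ℕ} {p : MvPolynomial (Fin n) ℝ}
    (hp : p.IsHomogeneous j) {t : ℕ → ℝ} (ht : Tendsto t atTop atTop) {z : ℕ → En n}
    {w : En n} (hz : Tendsto (fun k => (t k)⁻¹ • z k) atTop (𝓝 w)) :
    Tendsto (fun k => evalP p (z k) / t k ^ j) atTop (𝓝 (evalP p w)) := by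
  refine (((continuous_evalP p).tendsto w).comp hz).congr' ?_
  filter_upwards [ht.eventually_gt_atTop 0] with k hk
  rw [Function.comp_apply, hp.evalP_smul, inv_pow, inv_mul_eq_div]

lemma tendsto_evalP_div_pow {n d : ℕ} {f : MvPolynomial (Fin n) ℝ} (hf : f.totalDegree ≤ d)
    {t : ℕ → ℝ} (ht : Tendsto t atTop atTop) {z : ℕ → En n} {w : En n}
    (hz : Tendsto (fun k => (t k)⁻¹ • z k) atTop (𝓝 w)) :
    Tendsto (fun k => evalP f (z k) / t k ^ d) atTop
      (𝓝 (evalP (homogeneousComponent d f) w)) := by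
  have hcomp : ∀ j ∈ Finset.range (d + 1),
      Tendsto (fun k => evalP (homogeneousComponent j f) (z k) / t k ^ d) atTop
        (𝓝 (if j = d then evalP (homogeneousComponent d f) w else 0)) := by
    intro j hj
    have hj_lim := (homogeneousComponent_isHomogeneous j f).tendsto_evalP_div_pow ht hz
    split_ifs with hjd
    · exact hjd ▸ hj_lim
    have hj : j < d := by grind
    have hdecay : Tendsto (fun k => (t k ^ (d - j))⁻¹) atTop (𝓝 0) :=
      tendsto_inv_atTop_zero.comp ((tendsto_pow_atTop (by omega)).comp ht)
    refine (mul_zero (evalP (homogeneousComponent j f) w) ▸ hj_lim.mul hdecay).congr fun k => ?_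
    rw [← div_eq_mul_inv, div_div, ← pow_add, Nat.add_sub_cancel' hj.le]
  simpa [← Finset.sum_div, ← evalP_eq_sum_homogeneousComponent hf] using
    tendsto_finsetSum _ hcomp

lemma tendsto_evalP_div_pow_zero {n d : ℕ} {g : ℕ → MvPolynomial (Fin n) ℝ}
    (hg : ∀ k, (g k).totalDegree ≤ d) (hg0 : Tendsto (fun k => l2Norm (g k)) atTop (𝓝 0))
    {t : ℕ → ℝ} (ht : Tendsto t atTop atTop) {z : ℕ → En n} {w : En n}
    (hz : Tendsto (fun k => (t k)⁻¹ • z k) atTop (𝓝 w)) :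
    Tendsto (fun k => evalP (g k) (z k) / t k ^ d) atTop (𝓝 0) := by
  set B := ‖w‖ + 1
  have hbound : ∀ᶠ k in atTop,
      ‖evalP (g k) (z k) / t k ^ d‖ ≤ (d + 1) ^ n * B ^ d * l2Norm (g k) := by
    filter_upwards [ht.eventually_ge_atTop 1,
      hz.norm.eventually (gt_mem_nhds (lt_add_one ‖w‖))] with k ht1 hzk
    have htk : 0 < t k := one_pos.trans_le ht1
    have hmax : max 1 ‖z k‖ ≤ B * t k := by
      rw [norm_smul, norm_inv, Real.norm_of_nonneg htk.le, inv_mul_lt_iff₀ htk] at hzk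
      exact max_le (by nlinarith [norm_nonneg w]) (by linarith)
    have := l2Norm_nonneg (g k)
    rw [norm_div, norm_pow, Real.norm_of_nonneg htk.le, div_le_iff₀ (by positivity)]
    calc ‖evalP (g k) (z k)‖ ≤ (d + 1) ^ n * l2Norm (g k) * max 1 ‖z k‖ ^ d :=
          abs_evalP_le (hg k) _
      _ ≤ (d + 1) ^ n * l2Norm (g k) * (B * t k) ^ d := by gcongr
      _ = (d + 1) ^ n * B ^ d * l2Norm (g k) * t k ^ d := by rw [mul_pow]; ring
  exact squeeze_zero_norm' hbound (by simpa using hg0.const_mul ((d + 1) ^ n * B ^ d))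

lemma tendsto_evalP_add_div_pow {n d : ℕ} {f : MvPolynomial (Fin n) ℝ} (hf : f.totalDegree ≤ d)
    {g : ℕ → MvPolynomial (Fin n) ℝ} (hg : ∀ k, (g k).totalDegree ≤ d)
    (hg0 : Tendsto (fun k => l2Norm (g k)) atTop (𝓝 0)) {t : ℕ → ℝ}
    (ht : Tendsto t atTop atTop) {z : ℕ → En n} {w : En n}
    (hz : Tendsto (fun k => (t k)⁻¹ • z k) atTop (𝓝 w)) :
    Tendsto (fun k => evalP (f + g k) (z k) / t k ^ d) atTop
      (𝓝 (evalP (homogeneousComponent d f) w)) := by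
  simpa [evalP_add, add_div] using
    (tendsto_evalP_div_pow hf ht hz).add (tendsto_evalP_div_pow_zero hg hg0 ht hz)

lemma smul_mem_asympCone {n : ℕ} {K : Set (En n)} {v : En n} (hv : v ∈ asympCone K) {c : ℝ}
    (hc : 0 ≤ c) : c • v ∈ asympCone K := by
  obtain ⟨t, x, hxK, ht, hlim⟩ := hv
  rcases hc.eq_or_lt with rfl | hc
  · refine ⟨t, fun _ => x 0, fun _ => hxK 0, ht, ?_⟩
    simpa using (tendsto_inv_atTop_zero.comp ht).smul_const (x 0)
  · refine ⟨fun k => t k / c, x, hxK, ht.atTop_div_const hc, ?_⟩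
    simpa [div_eq_mul_inv, mul_smul, mul_comm] using hlim.const_smul c

lemma add_smul_mem_of_mem_asympCone {n : ℕ} {K : Set (En n)} (hKcl : IsClosed K)
    (hKcv : Convex ℝ K) {w : En n} (hw : w ∈ asympCone K) {y : En n} (hy : y ∈ K) {s : ℝ}
    (hs : 0 ≤ s) : y + s • w ∈ K := by
  obtain ⟨t, x, hxK, ht, hlim⟩ := hw
  have hs_div : Tendsto (fun k => s / t k) atTop (𝓝 0) := by
    simpa [div_eq_mul_inv] using (tendsto_inv_atTop_zero.comp ht).const_mul s
  -- `y + s • w` is the limit of the points `y + (s / t k) • (x k - y)` of the segments `[y, x k]`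
  have hlim' : Tendsto (fun k => y + (s / t k) • (x k - y)) atTop (𝓝 (y + s • w)) := by
    have h := (hlim.const_smul s).sub (hs_div.smul_const y)
    simp only [zero_smul, sub_zero, smul_smul, ← div_eq_mul_inv] at h
    simpa [smul_sub] using h.const_add y
  refine hKcl.mem_of_tendsto hlim' ?_
  filter_upwards [ht.eventually_ge_atTop (max s 1)] with k hk
  have htk : 0 < t k := one_pos.trans_le ((le_max_right s 1).trans hk)
  exact hKcv.add_smul_sub_mem hy (hxK k)
    ⟨div_nonneg hs htk.le, (div_le_one htk).2 ((le_max_left s 1).trans hk)⟩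

lemma mem_solSet_asympCone_of_tendsto {n d : ℕ} {K : Set (En n)} (hKne : K.Nonempty)
    (hKcl : IsClosed K) (hKcv : Convex ℝ K) {f : MvPolynomial (Fin n) ℝ}
    (hf : f.totalDegree ≤ d) {g : ℕ → MvPolynomial (Fin n) ℝ} (hg : ∀ k, (g k).totalDegree ≤ d)
    (hg0 : Tendsto (fun k => l2Norm (g k)) atTop (𝓝 0)) {x : ℕ → En n}
    (hx : ∀ k, x k ∈ solSet K (evalP (f + g k))) {t : ℕ → ℝ} (ht : Tendsto t atTop atTop)
    {v : En n} (hv : Tendsto (fun k => (t k)⁻¹ • x k) atTop (𝓝 v)) :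
    v ∈ solSet (asympCone K) (evalP (homogeneousComponent d f)) := by
  refine ⟨⟨t, x, fun k => (hx k).1, ht, hv⟩, fun w hw => ?_⟩
  obtain ⟨y, hy⟩ := hKne
  have hz : Tendsto (fun k => (t k)⁻¹ • (y + t k • w)) atTop (𝓝 w) := by
    have h := ((tendsto_inv_atTop_zero.comp ht).smul_const y).add_const w
    rw [zero_smul, zero_add] at h
    refine h.congr' ?_
    filter_upwards [ht.eventually_gt_atTop 0] with k hk
    rw [Function.comp_apply, smul_add, smul_smul, inv_mul_cancel₀ hk.ne', one_smul]
  refine le_of_tendsto_of_tendsto (tendsto_evalP_add_div_pow hf hg hg0 ht hv)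
    (tendsto_evalP_add_div_pow hf hg hg0 ht hz) ?_
  filter_upwards [ht.eventually_gt_atTop 0] with k hk
  exact div_le_div_of_nonneg_right
    ((hx k).2 _ (add_smul_mem_of_mem_asympCone hKcl hKcv hw hy hk.le)) (by positivity)

lemma not_isBounded_solSet_of_homogeneous {n d : ℕ} (hd : d ≠ 0) {C : Set (En n)}
    {F : En n → ℝ} (hC : ∀ c : ℝ, 0 ≤ c → ∀ x ∈ C, c • x ∈ C)
    (hF : ∀ c : ℝ, 0 ≤ c → ∀ x, F (c • x) = c ^ d * F x) {v : En n} (hv : v ∈ solSet C F)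
    (hv0 : v ≠ 0) : ¬IsBounded (solSet C F) := by
  -- comparing `v` with `0 • v` and `2 • v` forces the minimum value to be `0`
  have hmin : F v = 0 := by
    have h0 := hv.2 _ (hC 0 le_rfl v hv.1)
    have h2 := hv.2 _ (hC 2 zero_le_two v hv.1)
    rw [hF 0 le_rfl, zero_pow hd, zero_mul] at h0
    rw [hF 2 zero_le_two] at h2
    nlinarith [one_lt_pow₀ (one_lt_two : (1 : ℝ) < 2) hd]
  have hray : ∀ c : ℝ, 0 ≤ c → c • v ∈ solSet C F := fun c hc =>
    ⟨hC c hc v hv.1, fun y hy => by rw [hF c hc, hmin, mul_zero, ← hmin]; exact hv.2 y hy⟩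
  intro hbdd
  obtain ⟨R, hR⟩ := isBounded_iff_forall_norm_le.1 hbdd
  have hv_pos : 0 < ‖v‖ := norm_pos_iff.2 hv0
  have hR' := hR _ (hray ((|R| + 1) / ‖v‖) (by positivity))
  rw [norm_smul, Real.norm_of_nonneg (by positivity), div_mul_cancel₀ _ hv_pos.ne'] at hR'
  linarith [le_abs_self R]

lemma exists_subseq_tendsto_inv_norm_smul {E : Type*} [NormedAddCommGroup E] [NormedSpace ℝ E]
    [ProperSpace E] {x : ℕ → E} (hx : ∀ k, x k ≠ 0) :
    ∃ v, ‖v‖ = 1 ∧ ∃ φ : ℕ → ℕ, StrictMono φ ∧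
      Tendsto (fun k => ‖x (φ k)‖⁻¹ • x (φ k)) atTop (𝓝 v) := by
  obtain ⟨v, hv, φ, hφ, hlim⟩ := (isCompact_sphere (0 : E) 1).tendsto_subseq
    (x := fun k => ‖x k‖⁻¹ • x k) fun k => by simp [norm_smul, hx k]
  exact ⟨v, mem_sphere_zero_iff_norm.1 hv, φ, hφ, hlim⟩

/-- If `K` is nonempty closed convex and `OP(K,f)` is regular, then the solution map is
locally bounded at `f`: there is `ε > 0` such that the union of the sets `Sol(K, f+g)` over
all `g ∈ P_d` with `‖g‖ < ε` is bounded. -/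
theorem stmt9 {n d : ℕ} (hd : 1 ≤ d) (K : Set (En n)) (hKne : K.Nonempty) (hKcl : IsClosed K)
    (hKcv : Convex ℝ K) (f : MvPolynomial (Fin n) ℝ) (hdeg : f.totalDegree = d)
    (hreg : IsBounded (solSet (asympCone K) (evalP (homogeneousComponent d f)))) :
    ∃ ε > 0, IsBounded
      (⋃ g ∈ {g : MvPolynomial (Fin n) ℝ | g.totalDegree ≤ d ∧ l2Norm g < ε},
        solSet K (evalP (f + g))) := by
  by_contra! hcon
  have hseq : ∀ k : ℕ, ∃ x g, g.totalDegree ≤ d ∧ l2Norm g < 1 / (k + 1) ∧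
      x ∈ solSet K (evalP (f + g)) ∧ (k : ℝ) < ‖x‖ := by
    intro k
    have hk := hcon (1 / (k + 1)) (by positivity)
    simp only [isBounded_iff_forall_norm_le, not_exists, not_forall, not_le, Set.mem_iUnion,
      exists_prop] at hk
    obtain ⟨x, ⟨g, ⟨hg, hg_small⟩, hx⟩, hxk⟩ := hk k
    exact ⟨x, g, hg, hg_small, hx, hxk⟩
  choose x g hg hg_small hx hxk using hseq
  have ht : Tendsto (fun k => ‖x k‖) atTop atTop :=
    tendsto_atTop_mono (fun k => (hxk k).le) tendsto_natCast_atTop_atTop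
  have hg0 : Tendsto (fun k => l2Norm (g k)) atTop (𝓝 0) :=
    squeeze_zero (fun k => l2Norm_nonneg _) (fun k => (hg_small k).le)
      tendsto_one_div_add_atTop_nhds_zero_nat
  obtain ⟨v, hv1, φ, hφ, hv⟩ := exists_subseq_tendsto_inv_norm_smul fun k =>
    norm_pos_iff.1 ((Nat.cast_nonneg k).trans_lt (hxk k))
  have hv_sol := mem_solSet_asympCone_of_tendsto hKne hKcl hKcv hdeg.le (fun k => hg (φ k))
    (hg0.comp hφ.tendsto_atTop) (fun k => hx (φ k)) (ht.comp hφ.tendsto_atTop) hv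
  exact not_isBounded_solSet_of_homogeneous (by omega) (fun c hc w hw => smul_mem_asympCone hw hc)
    (fun c _ w => (homogeneousComponent_isHomogeneous d f).evalP_smul c w) hv_sol
    (norm_ne_zero_iff.1 (hv1 ▸ one_ne_zero)) hreg
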